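/- arXiv:1211.6303 — 5 statements merged into one kernel-verified Lean document; each statement's English description precedes it below -/
import Mathlib

section
/- Let R be a discrete valuation ring with field of fractions K and residue field k. Let A be an R-algebra that is free of finite rank as an R-module, and let X, Y be A-modules that are free of finite rank over R. If M is a K⊗A-submodule of K⊗Y such that Hom_{K⊗A}(K⊗X, (K⊗Y)/M) ≠ 0, then there exists a k⊗A-submodule N of k⊗Y such that Hom_{k⊗A}(k⊗X, (k⊗Y)/N) ≠ 0. -/
/-!
Let `Q = (K ⊗ Y)/M` and let `T ⊆ Q` be the image of `Y`, a finitely generated `R`-lattice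
spanning `Q` over `K`. Restricting the given homomorphism to `X` and clearing denominators gives
an `A`-equivariant `R`-linear map `X → T`; by Krull's intersection theorem it can be rescaled by
a power of a uniformizer so that it lands in `T` but not in `𝔪 T`. Since `X` is projective it
lifts to `h : X → Y`, which is equivariant modulo `L = ker (Y → Q)`, and reducing modulo `𝔪`
gives a nonzero equivariant map `k ⊗ X → (k ⊗ Y)/N`, where `N` is the image of the lattice `L`
in `k ⊗ Y`.
-/

open TensorProduct

namespace Submodule

variable {R A M N : Type*} [CommRing R] [CommRing A] [Algebra R A]
  [AddCommGroup M] [Module R M] [AddCommGroup N] [Module R N]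

theorem baseChange_apply_mem_baseChange {p : Submodule R M} {q : Submodule R N}
    {u : M →ₗ[R] N} (hu : ∀ m ∈ p, u m ∈ q) {z : A ⊗[R] M} (hz : z ∈ p.baseChange A) :
    u.baseChange A z ∈ q.baseChange A := by
  obtain ⟨w, rfl⟩ := hz
  refine ⟨(u.restrict hu).baseChange A w, ?_⟩
  rw [← LinearMap.comp_apply, ← LinearMap.comp_apply, ← LinearMap.baseChange_comp,
    ← LinearMap.baseChange_comp, LinearMap.subtype_comp_restrict]
  rfl

theorem span_range_mk_one_eq_top :
    span A (LinearMap.range (TensorProduct.mk R A M 1) : Set (A ⊗[R] M)) = ⊤ := by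
  simpa [baseChange_eq_span] using baseChange_top (R := R) (M := M) A

theorem span_range_restrictScalars_comp_mk_one_eq_top [Module A N] [IsScalarTower R A N]
    {q : A ⊗[R] M →ₗ[A] N} (hq : Function.Surjective q) :
    span A (LinearMap.range (q.restrictScalars R ∘ₗ TensorProduct.mk R A M 1) : Set N) = ⊤ := by
  rw [LinearMap.range_comp, map_coe, LinearMap.coe_restrictScalars, ← map_span,
    span_range_mk_one_eq_top, map_top, LinearMap.range_eq_top.mpr hq]

theorem comap_mk_one_restrictScalars_baseChange
    (hA : Function.Surjective (algebraMap R A)) (p : Submodule R M) :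
    ((p.baseChange A).restrictScalars R).comap (TensorProduct.mk R A M 1) =
      p ⊔ LinearMap.ker (TensorProduct.mk R A M 1) := by
  rw [baseChange_eq_span, restrictScalars_span R A hA, span_eq, comap_map_eq]

end Submodule

theorem TensorProduct.ker_mk_one_eq_smul_top {R M : Type*} [CommRing R] [AddCommGroup M]
    [Module R M] (I : Ideal R) :
    LinearMap.ker (TensorProduct.mk R (R ⧸ I) M 1) = I • ⊤ := by
  rw [← LinearEquiv.ker_comp (quotTensorEquivQuotSMul M I), quotTensorEquivQuotSMul_comp_mk,
    Submodule.ker_mkQ]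

section Lattice

variable {R K V : Type*} [CommRing R] [IsDomain R] [Field K] [Algebra R K] [IsFractionRing R K]
  [AddCommGroup V] [Module K V] [Module R V] [IsScalarTower R K V] {T : Submodule R V}

theorem exists_ne_zero_smul_mem_of_span_eq_top (hT : Submodule.span K (T : Set V) = ⊤) (v : V) :
    ∃ r : R, r ≠ 0 ∧ r • v ∈ T := by
  have := isLocalizedModule_id (nonZeroDivisors R) V K
  have hv : v ∈ T.localized' K (nonZeroDivisors R) LinearMap.id := by
    simp [Submodule.localized'_eq_span, hT]
  obtain ⟨t, ht, s, rfl⟩ := hv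
  refine ⟨s, nonZeroDivisors.ne_zero s.2, ?_⟩
  rwa [← Submonoid.smul_def, IsLocalizedModule.mk'_cancel']

theorem exists_ne_zero_smul_mem_of_fg (hT : Submodule.span K (T : Set V) = ⊤)
    {P : Submodule R V} (hP : P.FG) : ∃ r : R, r ≠ 0 ∧ ∀ v ∈ P, r • v ∈ T := by
  induction P, hP using Submodule.fg_induction with
  | singleton v =>
    obtain ⟨r, hr, hrv⟩ := exists_ne_zero_smul_mem_of_span_eq_top hT v
    refine ⟨r, hr, fun w hw => ?_⟩
    obtain ⟨s, rfl⟩ := Submodule.mem_span_singleton.mp hw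
    rw [smul_comm]
    exact T.smul_mem s hrv
  | sup P₁ P₂ _ _ ih₁ ih₂ =>
    obtain ⟨r₁, hr₁, h₁⟩ := ih₁
    obtain ⟨r₂, hr₂, h₂⟩ := ih₂
    refine ⟨r₁ * r₂, mul_ne_zero hr₁ hr₂, fun w hw => ?_⟩
    obtain ⟨v₁, hv₁, v₂, hv₂, rfl⟩ := Submodule.mem_sup.mp hw
    rw [smul_add, mul_comm, mul_smul, mul_comm, mul_smul]
    exact add_mem (T.smul_mem _ (h₁ v₁ hv₁)) (T.smul_mem _ (h₂ v₂ hv₂))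

end Lattice

section Krull

variable {R V : Type*} [CommRing R] [IsNoetherianRing R] [IsLocalRing R]
  [AddCommGroup V] [Module R V] {I : Ideal R} {T : Submodule R V} [Module.Finite R T]

theorem Submodule.iInf_pow_smul_eq_bot_of_isLocalRing (hI : I ≠ ⊤) :
    ⨅ n : ℕ, I ^ n • T = ⊥ := by
  have h := congrArg (map T.subtype) (I.iInf_pow_smul_eq_bot_of_isLocalRing (M := T) hI)
  simpa only [map_iInf _ T.injective_subtype, map_smul'', map_subtype_top, map_bot] using h

theorem exists_le_pow_smul_not_le_pow_succ_smul (hI : I ≠ ⊤) {P : Submodule R V} (hPT : P ≤ T)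
    (hP : P ≠ ⊥) : ∃ n : ℕ, P ≤ I ^ n • T ∧ ¬ P ≤ I ^ (n + 1) • T := by
  by_contra! h
  have hle : ∀ n : ℕ, P ≤ I ^ n • T := fun n => by
    induction n with
    | zero => simpa using hPT
    | succ n ih => exact h n ih
  refine hP (eq_bot_iff.mpr ?_)
  calc P ≤ ⨅ n : ℕ, I ^ n • T := le_iInf hle
    _ = ⊥ := Submodule.iInf_pow_smul_eq_bot_of_isLocalRing hI

end Krull

section DiscreteValuationRing

open IsLocalRing Submodule Pointwise

variable {R K V X : Type*} [CommRing R] [IsDomain R] [IsDiscreteValuationRing R]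
  [Field K] [Algebra R K] [IsFractionRing R K]
  [AddCommGroup V] [Module K V] [Module R V] [IsScalarTower R K V]
  [AddCommGroup X] [Module R X] [Module.Finite R X]

theorem exists_smul_mem_and_exists_smul_not_mem_maximalIdeal_smul (T : Submodule R V)
    [Module.Finite R T] (hT : span K (T : Set V) = ⊤) {φ : X →ₗ[R] V} (hφ : φ ≠ 0) :
    ∃ c : K, (∀ x, c • φ x ∈ T) ∧ ∃ x, c • φ x ∉ maximalIdeal R • T := by
  obtain ⟨r, hr, hrT⟩ := exists_ne_zero_smul_mem_of_fg hT (Module.Finite.fg_top.map φ)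
  have hrK : algebraMap R K r ≠ 0 := (map_ne_zero_iff _ (IsFractionRing.injective R K)).mpr hr
  have hPT : LinearMap.range (r • φ) ≤ T := by
    rintro _ ⟨x, rfl⟩
    exact hrT _ ⟨x, trivial, rfl⟩
  have hP : LinearMap.range (r • φ) ≠ ⊥ := by
    rw [Ne, LinearMap.range_eq_bot]
    refine fun h => hφ (LinearMap.ext fun x => ?_)
    have hx : algebraMap R K r • φ x = 0 := by rw [algebraMap_smul]; exact congr($h x)
    exact (smul_eq_zero.mp hx).resolve_left hrK
  obtain ⟨n, hle, hnle⟩ :=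
    exists_le_pow_smul_not_le_pow_succ_smul (maximalIdeal.isMaximal R).ne_top hPT hP
  obtain ⟨ϖ, hϖ⟩ := IsDiscreteValuationRing.exists_irreducible R
  have h𝔪 : maximalIdeal R = Ideal.span {ϖ} :=
    (IsDiscreteValuationRing.irreducible_iff_uniformizer ϖ).mp hϖ
  simp only [h𝔪, Ideal.span_singleton_pow, ideal_span_singleton_smul] at hle hnle ⊢
  have hu : algebraMap R K (ϖ ^ n) ≠ 0 :=
    (map_ne_zero_iff _ (IsFractionRing.injective R K)).mpr (pow_ne_zero n hϖ.ne_zero)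
  set c := (algebraMap R K (ϖ ^ n))⁻¹ * algebraMap R K r
  refine ⟨c, fun x => ?_, ?_⟩
  · obtain ⟨t, ht, hteq⟩ := (mem_smul_pointwise_iff_exists _ _ _).mp (hle ⟨x, rfl⟩)
    rwa [mul_smul, algebraMap_smul, ← LinearMap.smul_apply, ← hteq, ← algebraMap_smul K (ϖ ^ n),
      inv_smul_smul₀ hu]
  · by_contra! h
    refine hnle fun _ ⟨x, hx⟩ => hx ▸ (mem_smul_pointwise_iff_exists _ _ _).mpr ?_
    obtain ⟨t, ht, hteq⟩ := (mem_smul_pointwise_iff_exists _ _ _).mp (h x)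
    refine ⟨t, ht, ?_⟩
    calc ϖ ^ (n + 1) • t = algebraMap R K (ϖ ^ n) • ϖ • t := by
          rw [pow_succ, mul_smul, algebraMap_smul]
      _ = (r • φ) x := by
          rw [hteq, ← mul_smul, mul_inv_cancel_left₀ hu, algebraMap_smul, LinearMap.smul_apply]

end DiscreteValuationRing

section Lift

open IsLocalRing Submodule LinearMap

theorem LinearMap.apply_mem_smul_range_of_mem_ker_sup_smul_top {R M N : Type*} [CommRing R]
    [AddCommGroup M] [Module R M] [AddCommGroup N] [Module R N] (θ : M →ₗ[R] N) (I : Ideal R)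
    {y : M} (hy : y ∈ ker θ ⊔ I • ⊤) : θ y ∈ I • range θ := by
  obtain ⟨l, hl, m, hm, rfl⟩ := mem_sup.mp hy
  rw [map_add, mem_ker.mp hl, zero_add, range_eq_map, ← map_smul'']
  exact mem_map_of_mem hm

variable {R K A V X Y : Type*} [CommRing R] [IsDomain R] [IsDiscreteValuationRing R]
  [Field K] [Algebra R K] [IsFractionRing R K]
  [AddCommGroup V] [Module K V] [Module R V] [IsScalarTower R K V]
  [AddCommGroup X] [Module R X] [Module.Projective R X] [Module.Finite R X] [SMul A X]
  [AddCommGroup Y] [Module R Y] [Module.Finite R Y] [SMul A Y]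

theorem exists_lift_not_mem_ker_sup_maximalIdeal_smul (actV : A → V →ₗ[K] V)
    {θ : Y →ₗ[R] V} (hθ : ∀ a y, θ (a • y) = actV a (θ y))
    (hθK : span K (range θ : Set V) = ⊤) {φ : X →ₗ[R] V}
    (hφ : ∀ a x, φ (a • x) = actV a (φ x)) (hφ0 : φ ≠ 0) :
    ∃ h : X →ₗ[R] Y, (∀ (a : A) x, h (a • x) - a • h x ∈ ker θ) ∧
      ∃ x, h x ∉ ker θ ⊔ maximalIdeal R • ⊤ := by
  obtain ⟨c, hcT, x₁, hx₁⟩ :=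
    exists_smul_mem_and_exists_smul_not_mem_maximalIdeal_smul (range θ) hθK hφ0
  obtain ⟨h, hh⟩ := Module.projective_lifting_property θ.rangeRestrict
    ((c • φ).codRestrict _ hcT) θ.surjective_rangeRestrict
  have hθh : ∀ x, θ (h x) = c • φ x := fun x => congr(($hh x : V))
  refine ⟨h, fun a x => ?_, x₁, fun hx => hx₁ ?_⟩
  · rw [mem_ker, map_sub, hθh, hθ, hθh, hφ, map_smul, sub_self]
  · rw [← hθh]
    exact θ.apply_mem_smul_range_of_mem_ker_sup_smul_top _ hx

end Lift

section Residue

open IsLocalRing Submodule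

variable {R A X Y : Type*} [CommRing R] [IsLocalRing R] [Ring A] [Algebra R A]
  [AddCommGroup X] [Module R X] [Module A X] [IsScalarTower R A X]
  [AddCommGroup Y] [Module R Y] [Module A Y] [IsScalarTower R A Y]

theorem exists_ne_zero_equivariant_residueField (L : Submodule R Y)
    (hL : ∀ a : A, ∀ y ∈ L, a • y ∈ L) (h : X →ₗ[R] Y) (hh : ∀ (a : A) x, h (a • x) - a • h x ∈ L)
    {x₁ : X} (hx₁ : h x₁ ∉ L ⊔ maximalIdeal R • ⊤) :
    ∃ N : Submodule (ResidueField R) (ResidueField R ⊗[R] Y),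
      (∀ a : A, ∀ m ∈ N, (Algebra.lsmul R R Y a).baseChange (ResidueField R) m ∈ N) ∧
      ∃ hN : ∀ a : A, ∀ m ∈ N, (Algebra.lsmul R R Y a).baseChange (ResidueField R) m ∈ N,
      ∃ g : ResidueField R ⊗[R] X →ₗ[ResidueField R] (ResidueField R ⊗[R] Y) ⧸ N,
        g ≠ 0 ∧ ∀ a : A, g.comp ((Algebra.lsmul R R X a).baseChange (ResidueField R)) =
          (N.mapQ N ((Algebra.lsmul R R Y a).baseChange (ResidueField R)) (hN a)).comp g := by
  set N := L.baseChange (ResidueField R)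
  have hN : ∀ a : A, ∀ m ∈ N, (Algebra.lsmul R R Y a).baseChange (ResidueField R) m ∈ N :=
    fun a _ hm => baseChange_apply_mem_baseChange (hL a) hm
  have hmem : ∀ y : Y, (1 : ResidueField R) ⊗ₜ y ∈ N → y ∈ L ⊔ maximalIdeal R • ⊤ := by
    intro y hy
    have hker : LinearMap.ker (TensorProduct.mk R (ResidueField R) Y 1) = maximalIdeal R • ⊤ :=
      TensorProduct.ker_mk_one_eq_smul_top _
    have hcomap := comap_mk_one_restrictScalars_baseChange residue_surjective L
    rw [hker] at hcomap
    exact hcomap ▸ hy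
  refine ⟨N, hN, hN, (N.mkQ.restrictScalars R ∘ₗ TensorProduct.mk R _ Y 1 ∘ₗ h).liftBaseChange _,
    fun hg => hx₁ (hmem _ ?_), fun a => ?_⟩
  · simpa [Quotient.mk_eq_zero] using congr($hg (1 ⊗ₜ x₁))
  · ext x
    simp only [AlgebraTensorModule.curry_apply, LinearMap.restrictScalars_comp, curry_apply,
      LinearMap.coe_comp, LinearMap.coe_restrictScalars, Function.comp_apply,
      LinearMap.liftBaseChange_tmul, one_smul, mkQ_apply, mapQ_apply, TensorProduct.mk_apply,
      LinearMap.baseChange_tmul, Algebra.lsmul_coe]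
    rw [← sub_eq_zero, ← Quotient.mk_sub, Quotient.mk_eq_zero, ← TensorProduct.tmul_sub]
    exact tmul_mem_baseChange_of_mem 1 (hh a x)

end Residue

theorem stmt0_general
    (R : Type) [CommRing R] [IsDomain R] [IsDiscreteValuationRing R]
    (K : Type) [Field K] [Algebra R K] [IsFractionRing R K]
    (A : Type) [Ring A] [Algebra R A]
    (X Y : Type) [AddCommGroup X] [AddCommGroup Y]
    [Module R X] [Module R Y] [Module A X] [Module A Y]
    [IsScalarTower R A X] [IsScalarTower R A Y]
    [Module.Free R X] [Module.Finite R X] [Module.Finite R Y]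
    -- the A-actions on the base changes over K
    (actKX : A → (K ⊗[R] X) →ₗ[K] (K ⊗[R] X))
    (actKY : A → (K ⊗[R] Y) →ₗ[K] (K ⊗[R] Y))
    (hactKX : ∀ a : A, actKX a = LinearMap.baseChange K ((Algebra.lsmul R R X a : X →ₗ[R] X)))
    (hactKY : ∀ a : A, actKY a = LinearMap.baseChange K ((Algebra.lsmul R R Y a : Y →ₗ[R] Y)))
    -- the A-actions on the base changes over the residue field k
    (actkX : A → ((IsLocalRing.ResidueField R) ⊗[R] X) →ₗ[IsLocalRing.ResidueField R]
        ((IsLocalRing.ResidueField R) ⊗[R] X))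
    (actkY : A → ((IsLocalRing.ResidueField R) ⊗[R] Y) →ₗ[IsLocalRing.ResidueField R]
        ((IsLocalRing.ResidueField R) ⊗[R] Y))
    (hactkX : ∀ a : A, actkX a =
      LinearMap.baseChange (IsLocalRing.ResidueField R) ((Algebra.lsmul R R X a : X →ₗ[R] X)))
    (hactkY : ∀ a : A, actkY a =
      LinearMap.baseChange (IsLocalRing.ResidueField R) ((Algebra.lsmul R R Y a : Y →ₗ[R] Y)))
    -- a (K ⊗ A)-submodule M of K ⊗ Y
    (M : Submodule K (K ⊗[R] Y))
    (hM : ∀ a : A, ∀ m ∈ M, actKY a m ∈ M)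
    -- a nonzero (K ⊗ A)-homomorphism K ⊗ X → (K ⊗ Y)/M
    (f : (K ⊗[R] X) →ₗ[K] ((K ⊗[R] Y) ⧸ M))
    (hf : f ≠ 0)
    (hfequiv : ∀ a : A,
      f.comp (actKX a) = (Submodule.mapQ M M (actKY a) (fun m hm => hM a m hm)).comp f) :
    ∃ N : Submodule (IsLocalRing.ResidueField R) ((IsLocalRing.ResidueField R) ⊗[R] Y),
      (∀ a : A, ∀ m ∈ N, actkY a m ∈ N) ∧
      ∃ hN : ∀ a : A, ∀ m ∈ N, actkY a m ∈ N,
      ∃ g : ((IsLocalRing.ResidueField R) ⊗[R] X) →ₗ[IsLocalRing.ResidueField R]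
          (((IsLocalRing.ResidueField R) ⊗[R] Y) ⧸ N),
        g ≠ 0 ∧
        ∀ a : A, g.comp (actkX a) =
          (Submodule.mapQ N N (actkY a) (fun m hm => hN a m hm)).comp g := by
  obtain rfl : actKX = fun a => (Algebra.lsmul R R X a).baseChange K := funext hactKX
  obtain rfl : actKY = fun a => (Algebra.lsmul R R Y a).baseChange K := funext hactKY
  obtain rfl : actkX = fun a => (Algebra.lsmul R R X a).baseChange _ := funext hactkX
  obtain rfl : actkY = fun a => (Algebra.lsmul R R Y a).baseChange _ := funext hactkY
  set θ : Y →ₗ[R] (K ⊗[R] Y) ⧸ M := M.mkQ.restrictScalars R ∘ₗ TensorProduct.mk R K Y 1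
  set actQ := fun a : A => M.mapQ M ((Algebra.lsmul R R Y a).baseChange K) (hM a)
  have hθ : ∀ (a : A) y, θ (a • y) = actQ a (θ y) := fun a y => by simp [θ, actQ]
  have hφ : ∀ (a : A) x, (LinearMap.liftBaseChangeEquiv K).symm f (a • x) =
      actQ a ((LinearMap.liftBaseChangeEquiv K).symm f x) := fun a x => by
    simpa using congr($(hfequiv a) (1 ⊗ₜ x))
  obtain ⟨h, hh, x₁, hx₁⟩ := exists_lift_not_mem_ker_sup_maximalIdeal_smul actQ hθ
    (Submodule.span_range_restrictScalars_comp_mk_one_eq_top M.mkQ_surjective) hφ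
    ((LinearEquiv.map_ne_zero_iff _).mpr hf)
  exact exists_ne_zero_equivariant_residueField (LinearMap.ker θ)
    (fun a y hy => by rw [LinearMap.mem_ker, hθ, hy, map_zero]) h hh hx₁

/-- Let `R` be a DVR with fraction field `K` and residue field `k`.
Let `A` be an `R`-algebra, free of finite rank over `R`, and let `X`, `Y` be
`A`-modules that are free of finite rank over `R`.  A `K ⊗ A`-module is viewed as a
`K`-module together with a commuting action of `A` (given on base changes by
`LinearMap.baseChange` of the `A`-scalar-multiplication maps).  If `M` is a
`K ⊗ A`-submodule of `K ⊗ Y` (i.e. a `K`-submodule stable under the `A`-action) and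
there is a nonzero `K ⊗ A`-homomorphism `K ⊗ X → (K ⊗ Y)/M`, then there is an
`A`-stable `k`-submodule `N` of `k ⊗ Y` and a nonzero `k ⊗ A`-homomorphism
`k ⊗ X → (k ⊗ Y)/N`. -/
theorem stmt0
    (R : Type) [CommRing R] [IsDomain R] [IsDiscreteValuationRing R]
    (K : Type) [Field K] [Algebra R K] [IsFractionRing R K]
    (A : Type) [Ring A] [Algebra R A] [Module.Free R A] [Module.Finite R A]
    (X Y : Type) [AddCommGroup X] [AddCommGroup Y]
    [Module R X] [Module R Y] [Module A X] [Module A Y]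
    [IsScalarTower R A X] [IsScalarTower R A Y]
    [SMulCommClass A R X] [SMulCommClass A R Y]
    [Module.Free R X] [Module.Finite R X] [Module.Free R Y] [Module.Finite R Y]
    -- the A-actions on the base changes over K
    (actKX : A → (K ⊗[R] X) →ₗ[K] (K ⊗[R] X))
    (actKY : A → (K ⊗[R] Y) →ₗ[K] (K ⊗[R] Y))
    (hactKX : ∀ a : A, actKX a = LinearMap.baseChange K ((Algebra.lsmul R R X a : X →ₗ[R] X)))
    (hactKY : ∀ a : A, actKY a = LinearMap.baseChange K ((Algebra.lsmul R R Y a : Y →ₗ[R] Y)))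
    -- the A-actions on the base changes over the residue field k
    (actkX : A → ((IsLocalRing.ResidueField R) ⊗[R] X) →ₗ[IsLocalRing.ResidueField R]
        ((IsLocalRing.ResidueField R) ⊗[R] X))
    (actkY : A → ((IsLocalRing.ResidueField R) ⊗[R] Y) →ₗ[IsLocalRing.ResidueField R]
        ((IsLocalRing.ResidueField R) ⊗[R] Y))
    (hactkX : ∀ a : A, actkX a =
      LinearMap.baseChange (IsLocalRing.ResidueField R) ((Algebra.lsmul R R X a : X →ₗ[R] X)))
    (hactkY : ∀ a : A, actkY a =
      LinearMap.baseChange (IsLocalRing.ResidueField R) ((Algebra.lsmul R R Y a : Y →ₗ[R] Y)))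
    -- a (K ⊗ A)-submodule M of K ⊗ Y
    (M : Submodule K (K ⊗[R] Y))
    (hM : ∀ a : A, ∀ m ∈ M, actKY a m ∈ M)
    -- a nonzero (K ⊗ A)-homomorphism K ⊗ X → (K ⊗ Y)/M
    (f : (K ⊗[R] X) →ₗ[K] ((K ⊗[R] Y) ⧸ M))
    (hf : f ≠ 0)
    (hfequiv : ∀ a : A,
      f.comp (actKX a) = (Submodule.mapQ M M (actKY a) (fun m hm => hM a m hm)).comp f) :
    ∃ N : Submodule (IsLocalRing.ResidueField R) ((IsLocalRing.ResidueField R) ⊗[R] Y),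
      (∀ a : A, ∀ m ∈ N, actkY a m ∈ N) ∧
      ∃ hN : ∀ a : A, ∀ m ∈ N, actkY a m ∈ N,
      ∃ g : ((IsLocalRing.ResidueField R) ⊗[R] X) →ₗ[IsLocalRing.ResidueField R]
          (((IsLocalRing.ResidueField R) ⊗[R] Y) ⧸ N),
        g ≠ 0 ∧
        ∀ a : A, g.comp (actkX a) =
          (Submodule.mapQ N N (actkY a) (fun m hm => hN a m hm)).comp g :=
  stmt0_general R K A X Y actKX actKY hactKX hactKY actkX actkY hactkX hactkY M hM f hf hfequiv
end

section
/- Let p > 2, and let λ, μ be partitions represented with b beads on an abacus with p runners. If μ = d^r_{(i,j)}(λ), then μ lies in the W·_{δ'}-orbit of λ for δ' = rp − 2b + 2, where W is the infinite Weyl group of type D acting on ⊕_i ℝε_i by the δ'-shifted action w ·_{δ'} x = w(x + ρ(δ')) − ρ(δ'), with ρ(δ') = (−δ'/2, −δ'/2 − 1, −δ'/2 − 2, …). Explicitly, μ = w s_{ε_i + ε_j} ·_{δ'} λ for some w ∈ W that is a product of reflections s_{ε_a − ε_b}. -/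
/-- The basis vector `ε_i` of `⊕ ℝε_i` (modelled inside `ℕ → ℝ`, 1-indexed). -/
noncomputable def epsv (i : ℕ) : ℕ → ℝ := Pi.single i 1

/-- The type `D` reflection `s_{ε_i+ε_j} : x ↦ x − (x,ε_i+ε_j)(ε_i+ε_j)`. -/
noncomputable def sPlus (i j : ℕ) (x : ℕ → ℝ) : ℕ → ℝ := x - (x i + x j) • (epsv i + epsv j)

/-- The type `A` reflection `s_{ε_i−ε_j} : x ↦ x − (x,ε_i−ε_j)(ε_i−ε_j)`. -/
noncomputable def sMinus (i j : ℕ) (x : ℕ → ℝ) : ℕ → ℝ := x - (x i - x j) • (epsv i - epsv j)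

/-- `ρ(δ) = (−δ/2, −δ/2 − 1, −δ/2 − 2, …)`, 1-indexed: `ρ(δ)_a = −δ/2 − (a−1)`. -/
noncomputable def rhov (δ : ℝ) : ℕ → ℝ := fun a => -δ / 2 - ((a : ℝ) - 1)
/-! Under the shift by `ρ(δ')`, `λ + ρ(δ')` is the β-sequence of `λ` minus `rp/2` (this is what
`δ' = rp − 2b + 2` is for), and the move `β ↦ −β + rp` becomes negation. So
`s_{ε_i+ε_j}(λ + ρ(δ'))` carries on the bead positions `1, …, b` the same multiset of entries as
`μ + ρ(δ')` and agrees with it elsewhere; two such vectors differ by a permutation of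
`{1, …, b}`, a product of transpositions `s_{ε_a−ε_c}`. -/

lemma sMinus_apply (a c : ℕ) (x : ℕ → ℝ) (t : ℕ) : sMinus a c x t = x (Equiv.swap a c t) := by
  rcases eq_or_ne t a with rfl | hta
  · by_cases h : t = c <;> simp [sMinus, epsv, h]
  rcases eq_or_ne t c with rfl | htc
  · simp [sMinus, epsv, hta]
  · simp [sMinus, epsv, hta, htc, Equiv.swap_apply_of_ne_of_ne]

lemma sMinus_self (a : ℕ) (x : ℕ → ℝ) : sMinus a a x = x := by
  simp [sMinus]

lemma sMinus_sMinus (a c : ℕ) (x : ℕ → ℝ) : sMinus a c (sMinus a c x) = x := by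
  funext t
  simp [sMinus_apply]

lemma sMinus_comm (a c : ℕ) (x : ℕ → ℝ) : sMinus a c x = sMinus c a x := by
  funext t
  simp [sMinus_apply, Equiv.swap_comm]

lemma map_val_sMinus {s : Finset ℕ} {a c : ℕ} (ha : a ∈ s) (hc : c ∈ s) (x : ℕ → ℝ) :
    s.val.map (sMinus a c x) = s.val.map x := by
  have hperm : s.map (Equiv.swap a c).toEmbedding = s := Finset.map_perm fun t ht => by
    by_contra hts
    exact ht (Equiv.swap_apply_of_ne_of_ne (by rintro rfl; exact hts ha)
      (by rintro rfl; exact hts hc))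
  conv_rhs => rw [← hperm, Finset.map_val, Multiset.map_map]
  exact Multiset.map_congr rfl fun t _ => sMinus_apply a c x t

lemma sPlus_apply_left {i j : ℕ} (hij : i ≠ j) (x : ℕ → ℝ) : sPlus i j x i = -x j := by
  simp [sPlus, epsv, hij]

lemma sPlus_apply_right {i j : ℕ} (hij : i ≠ j) (x : ℕ → ℝ) : sPlus i j x j = -x i := by
  simp [sPlus, epsv, hij.symm]

lemma sPlus_apply_of_ne {i j t : ℕ} (hti : t ≠ i) (htj : t ≠ j) (x : ℕ → ℝ) :
    sPlus i j x t = x t := by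
  simp [sPlus, epsv, hti, htj]

theorem exists_sMinus_word_of_map_val_eq (s : Finset ℕ) (hs : ∀ t ∈ s, 1 ≤ t) {y z : ℕ → ℝ}
    (hmap : s.val.map y = s.val.map z) (hout : ∀ t ∉ s, y t = z t) :
    ∃ L : List (ℕ × ℕ), (∀ q ∈ L, 1 ≤ q.1 ∧ q.1 < q.2) ∧
      L.foldr (fun q f => sMinus q.1 q.2 ∘ f) id y = z := by
  induction s using Finset.induction_on generalizing z with
  | empty => exact ⟨[], by simp, funext fun t => hout t (Finset.notMem_empty t)⟩
  | insert a s has ih =>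
    obtain ⟨c, hc, hzc⟩ : ∃ c ∈ insert a s, z c = y a :=
      Multiset.mem_map.mp (hmap ▸ Multiset.mem_map_of_mem y (Finset.mem_insert_self a s))
    have hza : sMinus a c z a = y a := by simpa [sMinus_apply] using hzc
    have hmap' : s.val.map y = s.val.map (sMinus a c z) := by
      have h := hmap.trans (map_val_sMinus (Finset.mem_insert_self a s) hc z).symm
      rwa [Finset.insert_val_of_notMem has, Multiset.map_cons, Multiset.map_cons, hza,
        Multiset.cons_inj_right] at h
    have hout' : ∀ t ∉ s, y t = sMinus a c z t := by
      intro t ht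
      rcases eq_or_ne t a with rfl | hta
      · exact hza.symm
      have hts : t ∉ insert a s := by simp [hta, ht]
      rw [hout t hts, sMinus_apply,
        Equiv.swap_apply_of_ne_of_ne hta (by rintro rfl; exact hts hc)]
    obtain ⟨L, hL, hLy⟩ := ih (fun t ht => hs t (Finset.mem_insert_of_mem ht)) hmap' hout'
    have ha := hs a (Finset.mem_insert_self a s)
    rcases lt_trichotomy a c with hac | rfl | hca
    · refine ⟨(a, c) :: L, ?_, by simp [hLy, sMinus_sMinus]⟩
      simpa [ha, hac] using hL
    · exact ⟨L, hL, by rw [hLy, sMinus_self]⟩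
    · refine ⟨(c, a) :: L, ?_, by simp [hLy, sMinus_comm c a, sMinus_sMinus]⟩
      simpa [hs c hc, hca] using hL

lemma map_val_eq_cons_cons {α β : Type*} [DecidableEq α] {s : Finset α} {i j : α}
    (hi : i ∈ s) (hj : j ∈ s) (hij : i ≠ j) (f : α → β) :
    s.val.map f = f i ::ₘ f j ::ₘ ((s.erase i).erase j).val.map f := by
  have hj' : j ∈ s.val.erase i := (Multiset.mem_erase_of_ne hij.symm).mpr hj
  conv_lhs => rw [← Multiset.cons_erase hi, ← Multiset.cons_erase hj']
  simp only [Multiset.map_cons, Finset.erase_val]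

lemma add_rhov_eq_beta_sub {lam : ℕ → ℕ} {β : ℕ → ℤ} {b : ℕ}
    (hβ : ∀ a, β a = (lam a : ℤ) - a + b) (R : ℝ) :
    (fun a => (lam a : ℝ)) + rhov (R - 2 * b + 2) = fun a => (β a : ℝ) - R / 2 := by
  funext a
  simp only [Pi.add_apply, rhov, hβ a]
  push_cast
  ring

lemma map_val_sPlus_comp_eq_of_move {s : Finset ℕ} {i j : ℕ} (hi : i ∈ s) (hj : j ∈ s)
    (hij : i ≠ j) {c : ℤ} {g : ℤ → ℝ} (hg : ∀ t, g (-t + c) = -g t) {β β' : ℕ → ℤ}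
    (hmove : s.val.map β' = (((s.val.map β).erase (β i)).erase (β j)) + {-β i + c, -β j + c}) :
    s.val.map (sPlus i j (g ∘ β)) = s.val.map (g ∘ β') := by
  have hsplit {γ : Type} (f : ℕ → γ) := map_val_eq_cons_cons hi hj hij f
  have hrest : ∀ t ∈ (s.erase i).erase j, sPlus i j (g ∘ β) t = (g ∘ β) t := fun t ht => by
    simp only [Finset.mem_erase] at ht
    exact sPlus_apply_of_ne ht.2.1 ht.1 _
  rw [← Multiset.map_map, hmove, hsplit β, hsplit (sPlus i j (g ∘ β)),
    Multiset.erase_cons_head, Multiset.erase_cons_head, sPlus_apply_left hij,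
    sPlus_apply_right hij, Multiset.map_congr rfl hrest, Multiset.map_add, Multiset.map_map,
    Multiset.insert_eq_cons, Multiset.map_cons, Multiset.map_singleton, hg, hg, add_comm,
    Multiset.cons_add, Multiset.singleton_add, Multiset.cons_swap]
  rfl

theorem stmt8_general (p b : ℕ) (r : ℤ)
    (lam mu : ℕ → ℕ)
    (hlam0 : lam 0 = 0)
    (hlamsupp : ∀ a, b < a → lam a = 0)
    (hmu0 : mu 0 = 0)
    (hmusupp : ∀ a, b < a → mu a = 0)
    (i j : ℕ) (hi : 1 ≤ i) (hij : i < j) (hjb : j ≤ b)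
    (βlam βmu : ℕ → ℤ)
    (hβlam : ∀ a, βlam a = (lam a : ℤ) - a + b)
    (hβmu : ∀ a, βmu a = (mu a : ℤ) - a + b)
    (hmove : (Finset.Icc 1 b).val.map βmu =
      ((((Finset.Icc 1 b).val.map βlam).erase (βlam i)).erase (βlam j)) +
        {-βlam i + r * p, -βlam j + r * p})
    (δ' : ℝ) (hδ' : δ' = (r : ℝ) * p - 2 * b + 2) :
    ∃ L : List (ℕ × ℕ),
      (∀ q ∈ L, 1 ≤ q.1 ∧ q.1 < q.2) ∧
      (L.foldr (fun q f => sMinus q.1 q.2 ∘ f) id)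
          (sPlus i j ((fun a => (lam a : ℝ)) + rhov δ'))
        = (fun a => (mu a : ℝ)) + rhov δ' := by
  set g : ℤ → ℝ := fun t => t - r * p / 2
  have hg : ∀ t, g (-t + r * p) = -g t := fun t => by push_cast [g]; ring
  have hiS : i ∈ Finset.Icc 1 b := Finset.mem_Icc.mpr ⟨hi, by omega⟩
  have hjS : j ∈ Finset.Icc 1 b := Finset.mem_Icc.mpr ⟨by omega, hjb⟩
  have hout : ∀ t ∉ Finset.Icc 1 b, sPlus i j (g ∘ βlam) t = (g ∘ βmu) t := by
    intro t ht
    have hti : t ≠ i := by rintro rfl; exact ht hiS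
    have htj : t ≠ j := by rintro rfl; exact ht hjS
    have hlm : lam t = mu t := by
      have : t = 0 ∨ b < t := by simp only [Finset.mem_Icc] at ht; omega
      rcases this with rfl | hbt
      · rw [hlam0, hmu0]
      · rw [hlamsupp t hbt, hmusupp t hbt]
    simp [sPlus_apply_of_ne hti htj, hβlam, hβmu, hlm]
  rw [hδ', add_rhov_eq_beta_sub hβlam, add_rhov_eq_beta_sub hβmu]
  exact exists_sMinus_word_of_map_val_eq _ (fun t ht => (Finset.mem_Icc.mp ht).1)
    (map_val_sPlus_comp_eq_of_move hiS hjS hij.ne hg hmove) hout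

/-- Let `p > 2` and let `λ, μ` be partitions represented with `b` beads
on an abacus with `p` runners (β-sequence `β_λ(a) = λ_a − a + b` for `1 ≤ a ≤ b`).  If
`μ = d^r_{(i,j)}(λ)`, i.e. the β-multiset of `μ` is that of `λ` with the entries
`β_λ(i), β_λ(j)` replaced by `−β_λ(i) + rp, −β_λ(j) + rp`, then `μ ∈ W ·_{δ'} λ` for
`δ' = rp − 2b + 2`: explicitly `μ = w s_{ε_i+ε_j} ·_{δ'} λ`, i.e.
`μ + ρ(δ') = (w ∘ s_{ε_i+ε_j})(λ + ρ(δ'))`, for some `w ∈ W` which is a product of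
reflections `s_{ε_a−ε_b}`. -/
theorem stmt8 (p b : ℕ) (hp : p.Prime) (hp2 : 2 < p) (r : ℤ)
    (lam mu : ℕ → ℕ)
    (hlam : Antitone fun a => lam (a + 1)) (hlam0 : lam 0 = 0)
    (hlamsupp : ∀ a, b < a → lam a = 0)
    (hmu : Antitone fun a => mu (a + 1)) (hmu0 : mu 0 = 0)
    (hmusupp : ∀ a, b < a → mu a = 0)
    (i j : ℕ) (hi : 1 ≤ i) (hij : i < j) (hjb : j ≤ b)
    (βlam βmu : ℕ → ℤ)
    (hβlam : ∀ a, βlam a = (lam a : ℤ) - a + b)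
    (hβmu : ∀ a, βmu a = (mu a : ℤ) - a + b)
    (hmove : (Finset.Icc 1 b).val.map βmu =
      ((((Finset.Icc 1 b).val.map βlam).erase (βlam i)).erase (βlam j)) +
        {-βlam i + r * p, -βlam j + r * p})
    (δ' : ℝ) (hδ' : δ' = (r : ℝ) * p - 2 * b + 2) :
    ∃ L : List (ℕ × ℕ),
      (∀ q ∈ L, 1 ≤ q.1 ∧ q.1 < q.2) ∧
      (L.foldr (fun q f => sMinus q.1 q.2 ∘ f) id)
          (sPlus i j ((fun a => (lam a : ℝ)) + rhov δ'))
        = (fun a => (mu a : ℝ)) + rhov δ' :=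
  stmt8_general p b r lam mu hlam0 hlamsupp hmu0 hmusupp i j hi hij hjb βlam βmu hβlam hβmu hmove δ'
    hδ'
end

section
/- Let λ, μ be partitions with μ ⊆ λ, related by μ = s_{ε_i+ε_j} ·_δ λ for some i < j. Then the skew diagram [λ]\[μ] consists of a horizontal strip in row i whose node contents are the integers from −λ_j + j + δ − 1 up to λ_i − i, together with a horizontal strip in row j whose node contents are the integers from −λ_i + i + δ − 1 up to λ_j − j; pairing the nodes of row i with those of row j in reverse order, the contents of each pair sum to δ − 1. -/
theorem setOf_exists_nat_Ioc_sub_eq_Icc (a b : ℕ) (k : ℤ) :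
    {z : ℤ | ∃ y : ℕ, a < y ∧ y ≤ b ∧ z = (y : ℤ) - k} = Set.Icc ((a : ℤ) + 1 - k) ((b : ℤ) - k) := by
  ext z
  simp only [Set.mem_ofPred_eq, Set.mem_Icc]
  constructor
  · rintro ⟨y, hay, hyb, rfl⟩
    omega
  · rintro ⟨hlo, hhi⟩
    exact ⟨(z + k).toNat, by omega, by omega, by omega⟩

theorem stmt12_general (δ : ℤ) (lam mu : ℕ → ℕ)
    (i j : ℕ)
    (c : ℤ) (hc : c = (lam i : ℤ) + lam j - δ - i - j + 2)
    (hmui : (mu i : ℤ) = (lam i : ℤ) - c)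
    (hmuj : (mu j : ℤ) = (lam j : ℤ) - c) :
    ({z : ℤ | ∃ y : ℕ, mu i < y ∧ y ≤ lam i ∧ z = (y : ℤ) - i} =
        Set.Icc (-(lam j : ℤ) + j + δ - 1) ((lam i : ℤ) - i)) ∧
    ({z : ℤ | ∃ y : ℕ, mu j < y ∧ y ≤ lam j ∧ z = (y : ℤ) - j} =
        Set.Icc (-(lam i : ℤ) + i + δ - 1) ((lam j : ℤ) - j)) ∧
    (∀ t : ℤ, 0 ≤ t → t < c →
      (((mu i : ℤ) + 1 + t) - i) + (((lam j : ℤ) - t) - j) = δ - 1) := by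
  refine ⟨?_, ?_, fun t _ _ => by rw [hmui, hc]; ring⟩
  · rw [setOf_exists_nat_Ioc_sub_eq_Icc, hmui, hc]
    congr 1
    ring
  · rw [setOf_exists_nat_Ioc_sub_eq_Icc, hmuj, hc]
    congr 1
    ring

/-- Let `λ, μ` be partitions (1-indexed) with `μ ⊆ λ`, related by
`μ = s_{ε_i+ε_j} ·_δ λ` for some `i < j`; explicitly `μ = λ − c(ε_i+ε_j)` with
`c = λ_i + λ_j − δ − i − j + 2 ≥ 0`.  Then the skew diagram `[λ]\[μ]` consists of a
horizontal strip in row `i` whose node contents (`content (x,y) = y − x`) are exactly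
the integers from `−λ_j + j + δ − 1` up to `λ_i − i`, and a horizontal strip in row `j`
whose contents are exactly the integers from `−λ_i + i + δ − 1` up to `λ_j − j`;
pairing the nodes of row `i` with those of row `j` in reverse order, the contents of
each pair sum to `δ − 1`. -/
theorem stmt12 (δ : ℤ) (lam mu : ℕ → ℕ)
    (hlam : Antitone fun a => lam (a + 1)) (hmu : Antitone fun a => mu (a + 1))
    (i j : ℕ) (hi : 1 ≤ i) (hij : i < j)
    (c : ℤ) (hc : c = (lam i : ℤ) + lam j - δ - i - j + 2) (hc0 : 0 ≤ c)
    (hmui : (mu i : ℤ) = (lam i : ℤ) - c)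
    (hmuj : (mu j : ℤ) = (lam j : ℤ) - c)
    (helse : ∀ a, a ≠ i → a ≠ j → mu a = lam a) :
    ({z : ℤ | ∃ y : ℕ, mu i < y ∧ y ≤ lam i ∧ z = (y : ℤ) - i} =
        Set.Icc (-(lam j : ℤ) + j + δ - 1) ((lam i : ℤ) - i)) ∧
    ({z : ℤ | ∃ y : ℕ, mu j < y ∧ y ≤ lam j ∧ z = (y : ℤ) - j} =
        Set.Icc (-(lam i : ℤ) + i + δ - 1) ((lam j : ℤ) - j)) ∧
    (∀ t : ℤ, 0 ≤ t → t < c →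
      (((mu i : ℤ) + 1 + t) - i) + (((lam j : ℤ) - t) - j) = δ - 1) :=
  stmt12_general δ lam mu i j c hc hmui hmuj
end

section
/- Let λ, μ be partitions with μ ⊆ λ related by μ = s_{ε_i+ε_j} ·_δ λ (i < j). Then the transposed partitions μ^T ⊆ λ^T are maximal δ-balanced: they are δ-balanced, and there is no partition ν with μ^T ⊊ ν ⊊ λ^T such that ν and λ^T are δ-balanced. -/
/-- The skew diagram `[λ]\[μ]` (1-indexed cells `(row, col)`), for `μ ⊆ λ`. -/
def skewCells (lam mu : ℕ → ℕ) : Set (ℕ × ℕ) :=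
  {c | 1 ≤ c.1 ∧ mu c.1 < c.2 ∧ c.2 ≤ lam c.1}

/-- `μ ⊆ λ` are `δ`-balanced: (i) the nodes of `[λ]\[μ]` admit a fixed-point-free
pairing in which the contents (`content (x,y) = y − x`) of each pair sum to `1 − δ`;
(ii) if `δ` is even and the nodes of contents `−δ/2` and `(2−δ)/2` in `[λ]\[μ]` form
the staircase configuration of `n` columns (cells `(x+k, y+k)` and `(x+k+1, y+k)`,
`k < n`), then `n` is even. -/
def IsBalanced (δ : ℤ) (lam mu : ℕ → ℕ) : Prop :=
  (∀ a, mu a ≤ lam a) ∧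
  (∃ f : ℕ × ℕ → ℕ × ℕ, ∀ c ∈ skewCells lam mu,
      f c ∈ skewCells lam mu ∧ f (f c) = c ∧ f c ≠ c ∧
      (((c.2 : ℤ) - c.1) + (((f c).2 : ℤ) - (f c).1) = 1 - δ)) ∧
  (Even δ → ∀ x y n : ℕ, 0 < n →
    ({c | c ∈ skewCells lam mu ∧
        (((c.2 : ℤ) - c.1) = -δ / 2 ∨ ((c.2 : ℤ) - c.1) = 1 - δ / 2)} =
      {c : ℕ × ℕ | ∃ k < n, c = (x + k, y + k) ∨ c = (x + k + 1, y + k)}) → Even n)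

/-- The transpose (conjugate) partition: `λ^T_y = #{a ≥ 1 | λ_a ≥ y}` (1-indexed). -/
noncomputable def transposeP (lam : ℕ → ℕ) : ℕ → ℕ :=
  fun y => Nat.card {a : ℕ // 1 ≤ a ∧ y ≤ lam a}

/-!
In transposed coordinates `[λ^T] \ [μ^T]` consists of the lowest `c` cells of columns `i` and
`j`, and the point reflection exchanging these two columns pairs contents summing to `1 - δ`.
For `μ^T ⊊ ν ⊊ λ^T` the diagram `[λ^T] \ [ν]` keeps the bottom parts of these columns. Pairing
the bottom cell of column `i` forces column `j` to be full, and a few more partners force the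
contents to form a single interval, each content occurring once, symmetric about `(1 - δ) / 2`
and with its middle inside one column. The middle cell is then paired with itself (`δ` odd), or
the two middle cells form a staircase with one column (`δ` even).
-/

theorem transposeP_eq_ncard (f : ℕ → ℕ) (y : ℕ) :
    transposeP f y = {a : ℕ | 1 ≤ a ∧ y ≤ f a}.ncard :=
  Nat.card_coe_set_eq _

theorem transposeP_zero (f : ℕ → ℕ) : transposeP f 0 = 0 := by
  rw [transposeP_eq_ncard]
  convert (Set.Ici_infinite 1).ncard using 2
  ext a
  simp

/-- The parts of `f` are `f 1 ≥ f 2 ≥ ⋯`; the value `f 0` plays no role. -/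
def IsPartition (f : ℕ → ℕ) : Prop :=
  Antitone (fun a => f (a + 1)) ∧ ∃ l, ∀ a, l ≤ a → f a = 0

namespace IsPartition

variable {f g : ℕ → ℕ}

theorem le_of_le (hf : IsPartition f) {r r' : ℕ} (hr : 1 ≤ r) (hrr' : r ≤ r') : f r' ≤ f r := by
  have h := hf.1 (show r - 1 ≤ r' - 1 by omega)
  simp only at h
  rwa [Nat.sub_add_cancel hr, Nat.sub_add_cancel (hr.trans hrr')] at h

theorem of_le (hf : IsPartition f) (hg : Antitone (fun a => g (a + 1))) (hgf : ∀ a, g a ≤ f a) :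
    IsPartition g := by
  obtain ⟨l, hl⟩ := hf.2
  exact ⟨hg, l, fun a ha => Nat.eq_zero_of_le_zero (hl a ha ▸ hgf a)⟩

theorem finite_setOf_le (hf : IsPartition f) {y : ℕ} (hy : 1 ≤ y) :
    {a : ℕ | 1 ≤ a ∧ y ≤ f a}.Finite := by
  obtain ⟨l, hl⟩ := hf.2
  refine (Set.finite_Iio l).subset fun a ha => ?_
  by_contra h
  have := hl a (not_lt.mp h)
  exact absurd ha.2 (by omega)

theorem le_transposeP_iff (hf : IsPartition f) {y a : ℕ} (hy : 1 ≤ y) (ha : 1 ≤ a) :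
    a ≤ transposeP f y ↔ y ≤ f a := by
  rw [transposeP_eq_ncard]
  constructor
  · intro h
    by_contra! hya
    have hsub : {r : ℕ | 1 ≤ r ∧ y ≤ f r} ⊆ Set.Icc 1 (a - 1) := fun r ⟨hr, hyr⟩ =>
      ⟨hr, by by_contra! hra; have := hf.le_of_le ha (show a ≤ r by omega); omega⟩
    have := Set.ncard_le_ncard hsub (Set.finite_Icc _ _)
    rw [Set.ncard_Icc_nat] at this
    omega
  · intro h
    have hsub : Set.Icc 1 a ⊆ {r : ℕ | 1 ≤ r ∧ y ≤ f r} := fun r hr =>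
      ⟨hr.1, h.trans (hf.le_of_le hr.1 hr.2)⟩
    have := Set.ncard_le_ncard hsub (hf.finite_setOf_le hy)
    rw [Set.ncard_Icc_nat] at this
    omega

theorem transposeP_lt_iff (hf : IsPartition f) {y a : ℕ} (hy : 1 ≤ y) (ha : 1 ≤ a) :
    transposeP f y < a ↔ f a < y :=
  not_le.symm.trans ((hf.le_transposeP_iff hy ha).not.trans not_le)

theorem transposeP_eq_zero (hf : IsPartition f) {y : ℕ} (hy : f 1 < y) : transposeP f y = 0 := by
  rw [transposeP_eq_ncard, ← Set.ncard_empty ℕ]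
  congr
  exact Set.eq_empty_of_forall_notMem fun a ha =>
    absurd (ha.2.trans (hf.le_of_le le_rfl ha.1)) (by omega)

theorem transposeP_mono (hf : IsPartition f) (hgf : ∀ a, g a ≤ f a) (y : ℕ) :
    transposeP g y ≤ transposeP f y := by
  rcases Nat.eq_zero_or_pos y with rfl | hy
  · simp [transposeP_zero]
  · simp only [transposeP_eq_ncard]
    exact Set.ncard_le_ncard (fun a ha => ⟨ha.1, ha.2.trans (hgf a)⟩) (hf.finite_setOf_le hy)

theorem le_transposeP_of_transposeP_le (hf : IsPartition f) (hg : IsPartition g)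
    (h : ∀ a, transposeP f a ≤ g a) {b : ℕ} (hb : 1 ≤ b) : f b ≤ transposeP g b := by
  rcases Nat.eq_zero_or_pos (f b) with h0 | h0
  · omega
  · exact (hg.le_transposeP_iff hb h0).mpr
      (((hf.le_transposeP_iff h0 hb).mpr le_rfl).trans (h (f b)))

theorem transposeP_le_of_le_transposeP (hf : IsPartition f) (hg : IsPartition g)
    (h : ∀ a, g a ≤ transposeP f a) {b : ℕ} (hb : 1 ≤ b) : transposeP g b ≤ f b := by
  by_contra! hlt
  have hgb : b ≤ g (f b + 1) := (hg.le_transposeP_iff hb (by omega)).mp hlt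
  have := (hf.le_transposeP_iff (by omega) hb).mp (hgb.trans (h _))
  omega

end IsPartition

theorem isPartition_transposeP {f : ℕ → ℕ} (hf : IsPartition f) : IsPartition (transposeP f) := by
  refine ⟨fun a b hab => ?_, f 1 + 1, fun y hy => hf.transposeP_eq_zero (by omega)⟩
  simp only [transposeP_eq_ncard]
  exact Set.ncard_le_ncard (fun r hr => ⟨hr.1, le_trans (by omega) hr.2⟩)
    (hf.finite_setOf_le (by omega))

def content (x : ℕ × ℕ) : ℤ := x.2 - x.1

def column (b lo hi : ℕ) : Set (ℕ × ℕ) := {x | x.2 = b ∧ lo < x.1 ∧ x.1 ≤ hi}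

@[simp]
theorem mk_mem_column {a b' b lo hi : ℕ} : (a, b') ∈ column b lo hi ↔ b' = b ∧ lo < a ∧ a ≤ hi :=
  Iff.rfl

theorem column_self (b hi : ℕ) : column b hi hi = ∅ :=
  Set.eq_empty_of_forall_notMem fun _ hx => absurd hx.2.1 (not_lt.mpr hx.2.2)

def IsContentPairing (δ : ℤ) (S : Set (ℕ × ℕ)) (f : ℕ × ℕ → ℕ × ℕ) : Prop :=
  ∀ x ∈ S, f x ∈ S ∧ f (f x) = x ∧ f x ≠ x ∧ content x + content (f x) = 1 - δ

def StaircaseCondition (δ : ℤ) (S : Set (ℕ × ℕ)) : Prop :=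
  Even δ → ∀ x y n : ℕ, 0 < n →
    {c | c ∈ S ∧ (content c = -δ / 2 ∨ content c = 1 - δ / 2)} =
      {c : ℕ × ℕ | ∃ k < n, c = (x + k, y + k) ∨ c = (x + k + 1, y + k)} → Even n

theorem isBalanced_iff {δ : ℤ} {lam mu : ℕ → ℕ} :
    IsBalanced δ lam mu ↔ (∀ a, mu a ≤ lam a) ∧
      (∃ f, IsContentPairing δ (skewCells lam mu) f) ∧ StaircaseCondition δ (skewCells lam mu) :=
  Iff.rfl

theorem injOn_content_column (b lo hi : ℕ) : (column b lo hi).InjOn content := by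
  rintro ⟨a, b₁⟩ ⟨h₁, -⟩ ⟨a', b₂⟩ ⟨h₂, -⟩ h
  simp only [content] at h h₁ h₂ ⊢
  subst h₁ h₂
  ext
  · simp only; omega
  · rfl

theorem injOn_content_column_union {i j p q L M : ℕ} (h : i + M ≤ j + p) :
    (column i p L ∪ column j q M).InjOn content := by
  rintro ⟨a, b⟩ hx ⟨a', b'⟩ hx' he
  simp only [Set.mem_union, mk_mem_column, content] at hx hx' he
  ext <;> simp only <;> omega

namespace IsContentPairing

variable {δ : ℤ} {S : Set (ℕ × ℕ)} {f : ℕ × ℕ → ℕ × ℕ}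

theorem apply_injOn (hf : IsContentPairing δ S f) {x x' : ℕ × ℕ} (hx : x ∈ S) (hx' : x' ∈ S)
    (h : f x = f x') : x = x' := by
  rw [← (hf x hx).2.1, h, (hf x' hx').2.1]

/-- A column whose contents straddle the centre `(1 - δ) / 2` of the pairing contains either a
cell paired with itself (`δ` odd) or a one-column staircase (`δ` even). -/
theorem false_of_column_subset (hf : IsContentPairing δ S f) (hst : StaircaseCondition δ S)
    (hinj : S.InjOn content) {b lo hi : ℕ} (hcol : column b lo hi ⊆ S)
    (hlo : 1 - δ ≤ 2 * ((b : ℤ) - lo - 1)) (hhi : 2 * ((b : ℤ) - hi) ≤ 1 - δ) : False := by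
  obtain ⟨e, rfl | rfl⟩ := Int.even_or_odd' δ
  · obtain ⟨x, hx⟩ : ∃ x : ℕ, (x : ℤ) = b + e - 1 := ⟨(b + e - 1).toNat, by omega⟩
    have h₀ : (x, b) ∈ S := hcol ⟨rfl, by omega, by omega⟩
    have h₁ : (x + 1, b) ∈ S := hcol ⟨rfl, by omega, by omega⟩
    refine Nat.not_even_one (hst ⟨e, two_mul e⟩ x b 1 one_pos ?_)
    ext y
    simp only [Set.mem_ofPred_eq, Nat.lt_one_iff, exists_eq_left, add_zero]
    constructor
    · rintro ⟨hy, hc | hc⟩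
      · exact Or.inr (hinj hy h₁ (by simp only [content] at hc ⊢; omega))
      · exact Or.inl (hinj hy h₀ (by simp only [content] at hc ⊢; omega))
    · rintro (rfl | rfl)
      · exact ⟨h₀, Or.inr (by simp only [content]; omega)⟩
      · exact ⟨h₁, Or.inl (by simp only [content]; push_cast; omega)⟩
  · obtain ⟨a, ha⟩ : ∃ a : ℕ, (a : ℤ) = b + e := ⟨(b + e).toNat, by omega⟩
    have hx : (a, b) ∈ S := hcol ⟨rfl, by omega, by omega⟩
    obtain ⟨hfx, -, hne, hsum⟩ := hf _ hx
    exact hne (hinj hfx hx (by simp only [content] at hsum ⊢; omega))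

theorem false_of_column {b lo hi : ℕ} (hf : IsContentPairing δ (column b lo hi) f)
    (hst : StaircaseCondition δ (column b lo hi)) (h : lo < hi) : False := by
  obtain ⟨⟨hb₁, -, hhi₁⟩, -, -, hsum₁⟩ := hf (hi, b) ⟨rfl, h, le_rfl⟩
  obtain ⟨⟨hb₂, hlo₂, -⟩, -, -, hsum₂⟩ := hf (lo + 1, b) ⟨rfl, by omega, h⟩
  simp only [content] at hsum₁ hsum₂
  exact hf.false_of_column_subset hst (injOn_content_column b lo hi) subset_rfl
    (by push_cast at hsum₂; omega) (by omega)

/-- The top cell of a staircase is paired with another middle cell, which lies in another column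
of the staircase; with only two columns available the staircase has exactly two. -/
theorem staircaseCondition {i j : ℕ} (hf : IsContentPairing δ S f) (hS : ∀ x ∈ S, x.2 = i ∨ x.2 = j)
    (hswap : ∀ x ∈ S, (f x).2 ≠ x.2) : StaircaseCondition δ S := by
  rintro ⟨e, he⟩ x y n hn hset
  have hmem := fun c => Set.ext_iff.mp hset c
  simp only [Set.mem_ofPred_eq] at hmem
  obtain ⟨h₀, hc₀⟩ := (hmem (x, y)).mpr ⟨0, hn, Or.inl rfl⟩
  obtain ⟨-, hc₁⟩ := (hmem (x + 1, y)).mpr ⟨0, hn, Or.inr rfl⟩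
  obtain ⟨hfS, -, -, hsum⟩ := hf _ h₀
  simp only [content] at hc₀ hc₁ hsum
  obtain ⟨k, hk, hfk⟩ :=
    (hmem (f (x, y))).mp ⟨hfS, Or.inl (by simp only [content]; push_cast at hc₁; omega)⟩
  have hk₀ : k ≠ 0 := by
    rintro rfl
    apply hswap _ h₀
    rcases hfk with h | h <;> simp [h]
  have hcol : ∀ m < n, y + m = i ∨ y + m = j := fun m hm =>
    hS _ ((hmem (x + m, y + m)).mpr ⟨m, hm, Or.inl rfl⟩).1
  have hn₃ : n < 3 := by
    by_contra! h
    have := hcol 0 (by omega)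
    have := hcol 1 (by omega)
    have := hcol 2 (by omega)
    omega
  exact ⟨1, by omega⟩

/-- If column `i` is not empty, the partner of its bottom cell forces `q = mj`; the partners of
`(mj + 1 + (mi + c - p), j)` and of the two cells of content `j - (mj + c)` then force
`p + j = mj + c + i`, so that all contents are distinct and their middle lies in column `j`. -/
theorem eq_of_column_union {i j mi mj c p q : ℕ}
    (hf : IsContentPairing δ (column i p (mi + c) ∪ column j q (mj + c)) f)
    (hst : StaircaseCondition δ (column i p (mi + c) ∪ column j q (mj + c)))
    (hij : i < j) (hm : mj ≤ mi) (hp : mi ≤ p) (hp' : p ≤ mi + c) (hq : mj ≤ q) (hq' : q ≤ mj + c)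
    (hδ : 1 - δ = (i : ℤ) + j - mi - mj - c - 1) :
    (p = mi + c ∧ q = mj + c) ∨ (p = mi ∧ q = mj) := by
  set S := column i p (mi + c) ∪ column j q (mj + c)
  have partner : ∀ a b, (a, b) ∈ S → ((f (a, b)).2 = i ∧ p < (f (a, b)).1 ∧ (f (a, b)).1 ≤ mi + c ∨
      (f (a, b)).2 = j ∧ q < (f (a, b)).1 ∧ (f (a, b)).1 ≤ mj + c) ∧
      ((b : ℤ) - a) + ((f (a, b)).2 - (f (a, b)).1) = 1 - δ := fun a b hx =>
    ⟨(hf _ hx).1, (hf _ hx).2.2.2⟩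
  by_contra! hne
  rcases (show p < mi + c ∨ p = mi + c by omega) with hpL | rfl
  · obtain ⟨hy, hsum⟩ := partner (mi + c) i (Or.inl ⟨rfl, hpL, le_rfl⟩)
    have hqj : mj = q := by omega
    subst hqj
    have hmp : mi < p := by by_contra! h; exact hne.2 (by omega) rfl
    have hpM : p + j ≤ mj + c + i := by
      obtain ⟨hy, hsum⟩ := partner (mj + 1 + (mi + c - p)) j
        (Or.inr ⟨rfl, by omega, by omega⟩)
      push_cast at hsum
      omega
    have hMp : mj + c + i ≤ p + j := by
      by_contra! h
      have hx₁ : (mj + c, j) ∈ S := Or.inr ⟨rfl, by omega, le_rfl⟩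
      have hx₂ : (mj + c + i - j, i) ∈ S := Or.inl ⟨rfl, by omega, by omega⟩
      obtain ⟨hy₁, hsum₁⟩ := partner _ _ hx₁
      obtain ⟨hy₂, hsum₂⟩ := partner _ _ hx₂
      have := hf.apply_injOn hx₁ hx₂ (Prod.ext (by omega) (by omega))
      simp only [Prod.ext_iff] at this
      omega
    exact hf.false_of_column_subset hst (injOn_content_column_union (by omega))
      Set.subset_union_right (by omega) (by omega)
  · have hS : S = column j q (mj + c) := by simp only [S, column_self, Set.empty_union]
    rw [hS] at hf hst
    exact hf.false_of_column hst (by omega)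

end IsContentPairing

theorem isContentPairing_reflect {δ : ℤ} {i j mi mj c : ℕ} (hij : i < j)
    (hδ : 1 - δ = (i : ℤ) + j - mi - mj - c - 1) :
    IsContentPairing δ (column i mi (mi + c) ∪ column j mj (mj + c))
      (fun x => (mi + mj + c + 1 - x.1, i + j - x.2)) := by
  rintro ⟨a, b⟩ hx
  simp only [Set.mem_union, mk_mem_column, content, ne_eq, Prod.ext_iff] at hx ⊢
  omega

/-- `κ` describes the columns of `nu`: it is `transposeP nu` for a partition `nu`, and `mu` for
`nu = transposeP mu`. -/
theorem mem_skewCells_transposeP_iff {lam nu κ : ℕ → ℕ} (hlam : IsPartition lam)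
    (hκ : ∀ a b, 1 ≤ a → 1 ≤ b → (nu a < b ↔ κ b < a)) (x : ℕ × ℕ) :
    x ∈ skewCells (transposeP lam) nu ↔ 1 ≤ x.2 ∧ κ x.2 < x.1 ∧ x.1 ≤ lam x.2 := by
  obtain ⟨a, b⟩ := x
  constructor
  · rintro ⟨ha, hnu, hlam'⟩
    have hb : 1 ≤ b := by omega
    exact ⟨hb, (hκ a b ha hb).mp hnu, (hlam.le_transposeP_iff ha hb).mp hlam'⟩
  · rintro ⟨hb, hκb, hlam'⟩
    have ha : 1 ≤ a := by omega
    exact ⟨ha, (hκ a b ha hb).mpr hκb, (hlam.le_transposeP_iff ha hb).mpr hlam'⟩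

theorem skewCells_transposeP_eq_column_union {lam nu κ : ℕ → ℕ} {i j : ℕ} (hlam : IsPartition lam)
    (hκ : ∀ a b, 1 ≤ a → 1 ≤ b → (nu a < b ↔ κ b < a)) (hi : 1 ≤ i) (hj : 1 ≤ j)
    (hoff : ∀ b, 1 ≤ b → b ≠ i → b ≠ j → lam b ≤ κ b) :
    skewCells (transposeP lam) nu = column i (κ i) (lam i) ∪ column j (κ j) (lam j) := by
  ext ⟨a, b⟩
  rw [mem_skewCells_transposeP_iff hlam hκ]
  simp only [Set.mem_union, mk_mem_column]
  constructor
  · rintro ⟨hb, h⟩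
    by_cases hbi : b = i
    · subst hbi; exact Or.inl ⟨rfl, h⟩
    by_cases hbj : b = j
    · subst hbj; exact Or.inr ⟨rfl, h⟩
    have := hoff b hb hbi hbj
    omega
  · rintro (⟨rfl, h⟩ | ⟨rfl, h⟩)
    · exact ⟨hi, h⟩
    · exact ⟨hj, h⟩

theorem eq_of_skewCells_eq {lam mu nu : ℕ → ℕ} (hmn : ∀ a, mu a ≤ nu a) (hnl : ∀ a, nu a ≤ lam a)
    (h0 : lam 0 = 0) (h : skewCells lam nu = skewCells lam mu) : nu = mu := by
  funext a
  rcases Nat.eq_zero_or_pos a with rfl | ha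
  · have := hnl 0; have := hmn 0; omega
  · refine le_antisymm ?_ (hmn a)
    by_contra! hlt
    have hmem : (a, mu a + 1) ∈ skewCells lam mu := ⟨ha, Nat.lt_succ_self _, hlt.trans_le (hnl a)⟩
    rw [← h] at hmem
    exact absurd hmem.2.1 (not_lt.mpr hlt)

theorem isBalanced_of_skewCells_eq {δ : ℤ} {lam nu : ℕ → ℕ} {i j mi mj c : ℕ} (hij : i < j)
    (hδ : 1 - δ = (i : ℤ) + j - mi - mj - c - 1) (hle : ∀ a, nu a ≤ lam a)
    (hS : skewCells lam nu = column i mi (mi + c) ∪ column j mj (mj + c)) :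
    IsBalanced δ lam nu := by
  refine isBalanced_iff.mpr ⟨hle, ⟨_, hS ▸ isContentPairing_reflect hij hδ⟩, hS ▸ ?_⟩
  refine (isContentPairing_reflect hij hδ).staircaseCondition (i := i) (j := j) ?_ ?_
  · rintro x (hx | hx)
    exacts [Or.inl hx.1, Or.inr hx.1]
  · rintro x (⟨hb, -⟩ | ⟨hb, -⟩) <;> simp only <;> omega

theorem eq_or_eq_of_isBalanced {δ : ℤ} {lam mu nu : ℕ → ℕ} {i j c : ℕ} (hlam : IsPartition lam)
    (hmu : IsPartition mu) (hnu : IsPartition nu) (hi : 1 ≤ i) (hij : i < j)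
    (hli : lam i = mu i + c) (hlj : lam j = mu j + c) (hmj : mu j ≤ mu i)
    (hδ : 1 - δ = (i : ℤ) + j - mu i - mu j - c - 1)
    (helse : ∀ a, a ≠ i → a ≠ j → mu a = lam a)
    (hS : skewCells (transposeP lam) (transposeP mu) =
      column i (mu i) (mu i + c) ∪ column j (mu j) (mu j + c))
    (hmunu : ∀ a, transposeP mu a ≤ nu a) (hnulam : ∀ a, nu a ≤ transposeP lam a)
    (hbal : IsBalanced δ (transposeP lam) nu) : nu = transposeP lam ∨ nu = transposeP mu := by
  obtain ⟨-, ⟨g, hg⟩, hst⟩ := isBalanced_iff.mp hbal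
  have hlow : ∀ b, 1 ≤ b → mu b ≤ transposeP nu b := fun b hb =>
    hmu.le_transposeP_of_transposeP_le hnu hmunu hb
  have hup : ∀ b, 1 ≤ b → transposeP nu b ≤ lam b := fun b hb =>
    hlam.transposeP_le_of_le_transposeP hnu hnulam hb
  have hT : skewCells (transposeP lam) nu =
      column i (transposeP nu i) (mu i + c) ∪ column j (transposeP nu j) (mu j + c) := by
    rw [← hli, ← hlj]
    exact skewCells_transposeP_eq_column_union hlam
      (fun a b ha hb => (hnu.transposeP_lt_iff hb ha).symm) hi (by omega)
      fun b hb hbi hbj => helse b hbi hbj ▸ hlow b hb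
  rw [hT] at hg hst
  have := hlow i hi; have := hup i hi; have := hlow j (by omega); have := hup j (by omega)
  rcases hg.eq_of_column_union hst hij hmj (by omega) (by omega) (by omega) (by omega) hδ with
    ⟨hp, hq⟩ | ⟨hp, hq⟩
  · refine .inl (eq_of_skewCells_eq hnulam (fun _ => le_rfl) (transposeP_zero _) ?_).symm
    rw [hT, hp, hq, column_self, column_self, Set.union_empty]
    exact Set.eq_empty_of_forall_notMem fun x hx => absurd hx.2.2 (not_le.mpr hx.2.1)
  · exact .inr (eq_of_skewCells_eq hmunu hnulam (transposeP_zero _) (by rw [hT, hS, hp, hq]))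

theorem stmt13_general (δ : ℤ) (lam mu : ℕ → ℕ)
    (hlam : Antitone fun a => lam (a + 1))
    (hlamsupp : ∃ l, ∀ a, l ≤ a → lam a = 0)
    (hmu : Antitone fun a => mu (a + 1))
    (i j : ℕ) (hi : 1 ≤ i) (hij : i < j)
    (c : ℤ) (hc : c = (lam i : ℤ) + lam j - δ - i - j + 2) (hc0 : 0 ≤ c)
    (hmui : (mu i : ℤ) = (lam i : ℤ) - c)
    (hmuj : (mu j : ℤ) = (lam j : ℤ) - c)
    (helse : ∀ a, a ≠ i → a ≠ j → mu a = lam a) :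
    IsBalanced δ (transposeP lam) (transposeP mu) ∧
    ¬ ∃ nu : ℕ → ℕ, (Antitone fun a => nu (a + 1)) ∧
        (∀ a, transposeP mu a ≤ nu a) ∧ (∀ a, nu a ≤ transposeP lam a) ∧
        nu ≠ transposeP mu ∧ nu ≠ transposeP lam ∧
        IsBalanced δ (transposeP lam) nu := by
  have hlamP : IsPartition lam := ⟨hlam, hlamsupp⟩
  obtain ⟨c, rfl⟩ : ∃ n : ℕ, (n : ℤ) = c := ⟨c.toNat, Int.toNat_of_nonneg hc0⟩
  have hli : lam i = mu i + c := by omega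
  have hlj : lam j = mu j + c := by omega
  have hδ : 1 - δ = (i : ℤ) + j - mu i - mu j - c - 1 := by omega
  have hmj : mu j ≤ mu i := by have := hlamP.le_of_le hi hij.le; omega
  have hmule : ∀ a, mu a ≤ lam a := fun a => by
    by_cases hai : a = i; · subst hai; omega
    by_cases haj : a = j; · subst haj; omega
    exact (helse a hai haj).le
  have hmuP : IsPartition mu := hlamP.of_le hmu hmule
  have hS : skewCells (transposeP lam) (transposeP mu) =
      column i (mu i) (mu i + c) ∪ column j (mu j) (mu j + c) := by
    rw [← hli, ← hlj]
    exact skewCells_transposeP_eq_column_union hlamP (fun a b ha hb => hmuP.transposeP_lt_iff ha hb)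
      hi (by omega) fun b _ hbi hbj => (helse b hbi hbj).ge
  refine ⟨isBalanced_of_skewCells_eq hij hδ (hlamP.transposeP_mono hmule) hS, ?_⟩
  rintro ⟨nu, hnu, hmunu, hnulam, hne₁, hne₂, hbal⟩
  have hnuP : IsPartition nu := (isPartition_transposeP hlamP).of_le hnu hnulam
  rcases eq_or_eq_of_isBalanced hlamP hmuP hnuP hi hij hli hlj hmj hδ helse hS hmunu hnulam hbal
    with h | h
  exacts [hne₂ h, hne₁ h]

/-- Let `λ, μ` be partitions with `μ ⊆ λ` related by
`μ = s_{ε_i+ε_j} ·_δ λ` (`i < j`), i.e. `μ = λ − c(ε_i+ε_j)` with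
`c = λ_i + λ_j − δ − i − j + 2 ≥ 0`.  Then `μ^T ⊆ λ^T` are maximal `δ`-balanced:
they are `δ`-balanced, and there is no partition `ν` with `μ^T ⊊ ν ⊊ λ^T` such that
`ν` and `λ^T` are `δ`-balanced. -/
theorem stmt13 (δ : ℤ) (lam mu : ℕ → ℕ)
    (hlam : Antitone fun a => lam (a + 1)) (hlam0 : lam 0 = 0)
    (hlamsupp : ∃ l, ∀ a, l ≤ a → lam a = 0)
    (hmu : Antitone fun a => mu (a + 1)) (hmu0 : mu 0 = 0)
    (i j : ℕ) (hi : 1 ≤ i) (hij : i < j)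
    (c : ℤ) (hc : c = (lam i : ℤ) + lam j - δ - i - j + 2) (hc0 : 0 ≤ c)
    (hmui : (mu i : ℤ) = (lam i : ℤ) - c)
    (hmuj : (mu j : ℤ) = (lam j : ℤ) - c)
    (helse : ∀ a, a ≠ i → a ≠ j → mu a = lam a) :
    IsBalanced δ (transposeP lam) (transposeP mu) ∧
    ¬ ∃ nu : ℕ → ℕ, (Antitone fun a => nu (a + 1)) ∧
        (∀ a, transposeP mu a ≤ nu a) ∧ (∀ a, nu a ≤ transposeP lam a) ∧
        nu ≠ transposeP mu ∧ nu ≠ transposeP lam ∧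
        IsBalanced δ (transposeP lam) nu :=
  stmt13_general δ lam mu hlam hlamsupp hmu i j hi hij c hc hc0 hmui hmuj helse
end

section
/- Let p be prime and λ, μ partitions related by μ = s_{ε_i−ε_j, rp} ·_δ λ with μ ⊴ λ, μ ≠ λ, r ≠ 0, and suppose λ^T is p-regular. Then the number of nodes moved, d = λ_i − λ_j − i + j − rp, satisfies 0 < d < p, and λ_i − λ_j + j − i − d = rp is divisible by p, so the pair (λ, μ) satisfies the hypotheses of the Carter–Payne theorem with e = 1. -/
/-- A partition is `p`-regular if no (nonzero) part is repeated `p` or more times. -/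
def IsPRegular (p : ℕ) (nu : ℕ → ℕ) : Prop :=
  ¬ ∃ t, 1 ≤ t ∧ 0 < nu t ∧ nu (t + p - 1) = nu t

/-!
The first `i` rows of `μ` hold `d` nodes fewer than those of `λ`, so dominance at `N = i` gives
`d ≥ 0`, and `μ ≠ λ` makes `d > 0`. Since `μ` is again a partition,
`λ_i - d = μ_i ≥ μ_{i+1} ≥ λ_{i+1}`, so `d` is at most the gap `λ_i - λ_{i+1}`. Every column length
`y` with `λ_{i+1} < y ≤ λ_i` has `λ^T_y = i`, so that gap is a run of equal parts of `λ^T`, and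
`p`-regularity of `λ^T` makes it shorter than `p`.
-/

lemma antitoneOn_Ici_one_of_antitone_succ {f : ℕ → ℕ} (hf : Antitone fun a => f (a + 1)) :
    AntitoneOn f (Set.Ici 1) := by
  intro a ha b hb hab
  obtain ⟨a, rfl⟩ := Nat.exists_eq_add_of_le' (Set.mem_Ici.mp ha)
  obtain ⟨b, rfl⟩ := Nat.exists_eq_add_of_le' (Set.mem_Ici.mp hb)
  exact hf (Nat.le_of_succ_le_succ hab)

lemma transposeP_eq {lam : ℕ → ℕ} (hlam : AntitoneOn lam (Set.Ici 1)) {i y : ℕ}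
    (hlt : lam (i + 1) < y) (hle : y ≤ lam i) : transposeP lam y = i := by
  have hrows : {a : ℕ | 1 ≤ a ∧ y ≤ lam a} = Set.Icc 1 i := by
    ext a
    simp only [Set.mem_ofPred_eq, Set.mem_Icc]
    refine ⟨fun ⟨ha, hya⟩ => ⟨ha, ?_⟩, fun ⟨ha, hai⟩ => ⟨ha, ?_⟩⟩
    · by_contra! hia
      have := hlam (Set.mem_Ici.mpr (Nat.le_add_left 1 i)) (Set.mem_Ici.mpr ha) hia
      omega
    · exact hle.trans (hlam (Set.mem_Ici.mpr ha) (Set.mem_Ici.mpr (ha.trans hai)) hai)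
  calc transposeP lam y = Nat.card (Set.Icc 1 i) := Nat.card_congr (Equiv.setCongr hrows)
    _ = i := by simp

lemma lt_add_of_isPRegular_transposeP {p : ℕ} (hp : 0 < p) {lam : ℕ → ℕ}
    (hlam : AntitoneOn lam (Set.Ici 1)) (hreg : IsPRegular p (transposeP lam)) {i : ℕ}
    (hi : 1 ≤ i) : lam i < lam (i + 1) + p := by
  by_contra! hgap
  apply hreg
  refine ⟨lam (i + 1) + 1, by omega, ?_, ?_⟩
  · rw [transposeP_eq hlam (i := i) (by omega) (by omega)]
    omega
  · rw [show lam (i + 1) + 1 + p - 1 = lam (i + 1) + p by omega,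
      transposeP_eq hlam (i := i) (by omega) hgap,
      transposeP_eq hlam (i := i) (by omega) (by omega)]

section MoveNodes

variable {lam mu : ℕ → ℕ} {i j : ℕ} {d : ℤ}
  (hmu : ∀ a, (mu a : ℤ) = lam a - (if a = i then d else if a = j then -d else 0))
include hmu

lemma move_ne_zero (hne : mu ≠ lam) : d ≠ 0 := by
  rintro rfl
  exact hne (funext fun a => by simpa using hmu a)

lemma move_nonneg (hij : i < j) (hi : 1 ≤ i)
    (hdom : ∑ a ∈ Finset.Icc 1 i, mu a ≤ ∑ a ∈ Finset.Icc 1 i, lam a) : 0 ≤ d := by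
  have hsum : ∑ a ∈ Finset.Icc 1 i, (mu a : ℤ)
      = ∑ a ∈ Finset.Icc 1 i, ((lam a : ℤ) - if a = i then d else 0) := by
    refine Finset.sum_congr rfl fun a ha => ?_
    have haj : a ≠ j := by
      have := (Finset.mem_Icc.mp ha).2
      omega
    simp [hmu a, haj]
  rw [Finset.sum_sub_distrib, Finset.sum_ite_eq' (Finset.Icc 1 i) i (fun _ => d)] at hsum
  have hdomZ : ∑ a ∈ Finset.Icc 1 i, (mu a : ℤ) ≤ ∑ a ∈ Finset.Icc 1 i, (lam a : ℤ) := by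
    exact_mod_cast hdom
  simp only [Finset.mem_Icc, le_refl, and_true, hi, if_true] at hsum
  linarith

lemma move_le_sub_succ (hd : 0 ≤ d) (hmu_succ : mu (i + 1) ≤ mu i) :
    d ≤ (lam i : ℤ) - lam (i + 1) := by
  have hmui : (mu i : ℤ) = lam i - d := by simpa using hmu i
  have hmu_succ' : (lam (i + 1) : ℤ) ≤ mu (i + 1) := by
    rw [hmu (i + 1), if_neg (by omega)]
    split_ifs <;> linarith
  have : (mu (i + 1) : ℤ) ≤ mu i := by exact_mod_cast hmu_succ
  linarith

end MoveNodes

theorem stmt17_general (p : ℕ) (hp : p.Prime) (r : ℤ)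
    (lam mu : ℕ → ℕ)
    (hlam : Antitone fun a => lam (a + 1))
    (hmupart : Antitone fun a => mu (a + 1))
    (i j : ℕ) (hi : 1 ≤ i) (hij : i < j)
    (d : ℤ) (hd : d = (lam i : ℤ) - lam j - i + j - r * p)
    (hmu : ∀ a, (mu a : ℤ) =
      (lam a : ℤ) - (if a = i then d else if a = j then -d else 0))
    (hdom : ∀ N, (∑ a ∈ Finset.Icc 1 N, mu a) ≤ ∑ a ∈ Finset.Icc 1 N, lam a)
    (hne : mu ≠ lam)
    (hreg : IsPRegular p (transposeP lam)) :
    0 < d ∧ d < p ∧ ((lam i : ℤ) - lam j + j - i - d) = r * p := by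
  have hd0 : 0 ≤ d := move_nonneg hmu hij hi (hdom i)
  have hdpos : 0 < d := lt_of_le_of_ne hd0 (move_ne_zero hmu hne).symm
  have hmu_succ : mu (i + 1) ≤ mu i :=
    antitoneOn_Ici_one_of_antitone_succ hmupart hi (by simp) (Nat.le_succ i)
  have hgap := move_le_sub_succ hmu hd0 hmu_succ
  have hlt := lt_add_of_isPRegular_transposeP hp.pos
    (antitoneOn_Ici_one_of_antitone_succ hlam) hreg hi
  refine ⟨hdpos, ?_, by linarith⟩
  have : (lam i : ℤ) < lam (i + 1) + p := by exact_mod_cast hlt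
  linarith

/-- Let `p` be prime and `λ, μ` partitions (1-indexed) related by
`μ = s_{ε_i−ε_j, rp} ·_δ λ`, i.e. `μ = λ − d(ε_i − ε_j)` with
`d = λ_i − λ_j − i + j − rp`, with `μ ⊴ λ`, `μ ≠ λ`, `r ≠ 0`, and suppose `λ^T` is
`p`-regular.  Then `0 < d < p` and `λ_i − λ_j + j − i − d = rp` is divisible by `p`,
so `(λ, μ)` satisfies the hypotheses of the Carter–Payne theorem with `e = 1`. -/
theorem stmt17 (p : ℕ) (hp : p.Prime) (r : ℤ) (hr : r ≠ 0)
    (lam mu : ℕ → ℕ)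
    (hlam : Antitone fun a => lam (a + 1)) (hlam0 : lam 0 = 0)
    (hlamsupp : ∃ l, ∀ a, l ≤ a → lam a = 0)
    (hmupart : Antitone fun a => mu (a + 1)) (hmu0 : mu 0 = 0)
    (i j : ℕ) (hi : 1 ≤ i) (hij : i < j)
    (d : ℤ) (hd : d = (lam i : ℤ) - lam j - i + j - r * p)
    (hmu : ∀ a, (mu a : ℤ) =
      (lam a : ℤ) - (if a = i then d else if a = j then -d else 0))
    (hdom : ∀ N, (∑ a ∈ Finset.Icc 1 N, mu a) ≤ ∑ a ∈ Finset.Icc 1 N, lam a)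
    (hne : mu ≠ lam)
    (hreg : IsPRegular p (transposeP lam)) :
    0 < d ∧ d < p ∧ ((lam i : ℤ) - lam j + j - i - d) = r * p :=
  stmt17_general p hp r lam mu hlam hmupart i j hi hij d hd hmu hdom hne hreg
end
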